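/- arXiv:1710.07625 — 2 statements merged into one kernel-verified Lean document; each statement's English description precedes it below -/
import Mathlib

section
/- Interpolation inequality W ≤ c A^{11/8} E^{1/8} + c A^{3/2}: for u with u(·,t) ∈ H²(B_r) for a.e. t ∈ (t₀-r⁴, t₀+r⁴), r^{-5} ∫_{Q_r} |u|³ ≤ c (ess sup_s r^{-1} ∫_{B_r} u(s)²)^{11/8} (r^{-1} ∫_{Q_r} uₓₓ²)^{1/8} + c (ess sup_s r^{-1} ∫_{B_r} u(s)²)^{3/2}. -/
open MeasureTheory Set

/-!
For `v ∈ C²` on an interval of length `L` and every `0 < h ≤ L`, the mean value theorem on a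
subinterval of length `h` containing `x`, followed by Cauchy–Schwarz, gives
`|v x| ≤ 19 (h^{-1/2} ‖v‖₂ + h^{3/2} ‖v''‖₂)`. Optimising in `h` yields the Gagliardo–Nirenberg
bound `‖v‖_∞ ≤ 38 (‖v‖₂^{3/4} ‖v''‖₂^{1/4} + L^{-1/2} ‖v‖₂)`, hence
`∫ |v|³ ≤ ‖v‖_∞ ∫ v² ≤ 38 (N^{11/8} D^{1/8} + L^{-1/2} N^{3/2})` with `N = ∫ v²`, `D = ∫ v''²`.
In time, `N(t) ≤ r A` almost everywhere and Jensen's inequality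
`∫ D^{1/8} ≤ (2 r⁴)^{7/8} (∫ D)^{1/8}` finish the proof; all powers of `r` cancel because the
three quantities are scale invariant.
-/

lemma integral_rpow_le_of_le_one {α : Type*} [MeasurableSpace α] {μ : Measure α}
    [IsFiniteMeasure μ] {g : α → ℝ} (hg0 : 0 ≤ᵐ[μ] g) (hg : Integrable g μ)
    {θ : ℝ} (hθ0 : 0 ≤ θ) (hθ1 : θ ≤ 1) (hgθ : Integrable (fun x => g x ^ θ) μ) :
    ∫ x, g x ^ θ ∂μ ≤ μ.real univ ^ (1 - θ) * (∫ x, g x ∂μ) ^ θ := by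
  rcases eq_zero_or_neZero μ with rfl | _
  · simp only [integral_zero_measure]; positivity
  have hm : 0 < μ.real univ := measureReal_univ_pos
  have hJ := (Real.concaveOn_rpow hθ0 hθ1).le_map_average
    (Real.continuous_rpow_const hθ0).continuousOn isClosed_Ici hg0 hg hgθ
  simp only [average_eq, smul_eq_mul] at hJ
  rw [Real.mul_rpow (inv_nonneg.mpr hm.le) (integral_nonneg_of_ae hg0),
    Real.inv_rpow hm.le, inv_mul_le_iff₀ hm] at hJ
  calc ∫ x, g x ^ θ ∂μ ≤ μ.real univ * ((μ.real univ ^ θ)⁻¹ * (∫ x, g x ∂μ) ^ θ) := hJ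
    _ = μ.real univ ^ (1 - θ) * (∫ x, g x ∂μ) ^ θ := by
      rw [Real.rpow_sub hm, Real.rpow_one]; ring

lemma intervalIntegral_abs_le_rpow_mul_integral_sq {f : ℝ → ℝ} (hf : Continuous f)
    {a b c d : ℝ} (hac : a ≤ c) (hcd : c ≤ d) (hdb : d ≤ b) :
    ∫ x in c..d, |f x| ≤ (d - c) ^ (1 / 2 : ℝ) * (∫ x in a..b, f x ^ 2) ^ (1 / 2 : ℝ) := by
  have hsqrt : ∀ x, (f x ^ 2) ^ (1 / 2 : ℝ) = |f x| := fun x => by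
    rw [← Real.sqrt_eq_rpow, Real.sqrt_sq_eq_abs]
  have hCS := integral_rpow_le_of_le_one (μ := volume.restrict (Ioc c d)) (g := fun x => f x ^ 2)
    (Filter.Eventually.of_forall fun x => sq_nonneg _)
    ((hf.pow 2).integrableOn_Icc.mono_set Ioc_subset_Icc_self) (θ := 1 / 2) (by norm_num)
    (by norm_num) (by simp only [hsqrt]; exact hf.abs.integrableOn_Icc.mono_set Ioc_subset_Icc_self)
  simp only [hsqrt, measureReal_restrict_apply_univ, Real.volume_real_Ioc_of_le hcd] at hCS
  norm_num only at hCS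
  rw [intervalIntegral.integral_of_le hcd]
  refine hCS.trans
    (mul_le_mul_of_nonneg_left (Real.rpow_le_rpow ?_ ?_ (by norm_num)) (by positivity))
  · exact setIntegral_nonneg measurableSet_Ioc fun x _ => sq_nonneg _
  · rw [← intervalIntegral.integral_of_le hcd]
    exact intervalIntegral.integral_mono_interval hac hcd hdb
      (Filter.Eventually.of_forall fun x => sq_nonneg _) ((hf.pow 2).intervalIntegrable a b)

lemma exists_abs_mul_le_intervalIntegral_abs {v : ℝ → ℝ} (hv : Continuous v) {a b c d : ℝ}
    (hac : a ≤ c) (hcd : c ≤ d) (hdb : d ≤ b) :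
    ∃ y ∈ Icc c d, |v y| * (d - c) ≤ ∫ x in a..b, |v x| := by
  obtain ⟨y, hy, hmin⟩ := isCompact_Icc.exists_isMinOn (nonempty_Icc.mpr hcd) hv.abs.continuousOn
  refine ⟨y, hy, ?_⟩
  calc |v y| * (d - c) = ∫ _ in c..d, |v y| := by simp [mul_comm]
    _ ≤ ∫ x in c..d, |v x| := intervalIntegral.integral_mono_on hcd intervalIntegrable_const
          (hv.abs.intervalIntegrable c d) fun x hx => hmin hx
    _ ≤ ∫ x in a..b, |v x| := intervalIntegral.integral_mono_interval hac hcd hdb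
          (Filter.Eventually.of_forall fun x => abs_nonneg _) (hv.abs.intervalIntegrable a b)

lemma abs_sub_le_intervalIntegral_abs_deriv {g : ℝ → ℝ} (hg : ContDiff ℝ 1 g) {a b x y : ℝ}
    (hx : x ∈ Icc a b) (hy : y ∈ Icc a b) :
    |g x - g y| ≤ ∫ s in a..b, |deriv g s| := by
  wlog hyx : y ≤ x generalizing x y
  · rw [abs_sub_comm]; exact this hy hx (le_of_not_ge hyx)
  have hg' : Continuous (deriv g) := hg.continuous_deriv le_rfl
  rw [← intervalIntegral.integral_deriv_eq_sub (fun s _ => hg.differentiable one_ne_zero s)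
    (hg'.intervalIntegrable y x)]
  calc |∫ s in y..x, deriv g s| ≤ ∫ s in y..x, |deriv g s| :=
        intervalIntegral.abs_integral_le_integral_abs hyx
    _ ≤ ∫ s in a..b, |deriv g s| := intervalIntegral.integral_mono_interval hy.1 hyx hx.2
          (Filter.Eventually.of_forall fun s => abs_nonneg _) (hg'.abs.intervalIntegrable a b)

lemma abs_deriv_le_intervalIntegral_abs {v : ℝ → ℝ} (hv : ContDiff ℝ 2 v) {a b s : ℝ} (hab : a < b)
    (hs : s ∈ Icc a b) :
    |deriv v s| ≤ 18 / (b - a) ^ 2 * (∫ x in a..b, |v x|) + ∫ x in a..b, |deriv (deriv v) x| := by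
  set L := b - a
  have hL0 : 0 < L := sub_pos.mpr hab
  have hv' : ContDiff ℝ 1 (deriv v) := hv.iterate_deriv' 1 1
  -- the mean value theorem between points of the outer thirds where `|v|` is at most thrice its
  -- mean controls `deriv v` at one point
  obtain ⟨y, hy, hvy⟩ := exists_abs_mul_le_intervalIntegral_abs hv.continuous le_rfl
    (show a ≤ a + L / 3 by linarith) (show a + L / 3 ≤ b by linarith)
  obtain ⟨z, hz, hvz⟩ := exists_abs_mul_le_intervalIntegral_abs hv.continuous
    (show a ≤ b - L / 3 by linarith) (show b - L / 3 ≤ b by linarith) le_rfl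
  have hyz : L / 3 ≤ z - y := by linarith [hy.2, hz.1]
  obtain ⟨ξ, hξ, hslope⟩ := exists_deriv_eq_slope v (by linarith : y < z) hv.continuous.continuousOn
    (hv.differentiable (by norm_num)).differentiableOn
  have hξab : ξ ∈ Icc a b := ⟨by linarith [hy.1, hξ.1], by linarith [hz.2, hξ.2]⟩
  have hderivξ : |deriv v ξ| ≤ 18 / L ^ 2 * ∫ x in a..b, |v x| := by
    rw [hslope, abs_div, abs_of_pos (show 0 < z - y by linarith), div_le_iff₀ (by linarith)]
    calc |v z - v y| ≤ |v z| + |v y| := abs_sub _ _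
      _ ≤ 18 / L ^ 2 * (∫ x in a..b, |v x|) * (L / 3) := by
          field_simp
          nlinarith
      _ ≤ 18 / L ^ 2 * (∫ x in a..b, |v x|) * (z - y) := by
          have : 0 ≤ ∫ x in a..b, |v x| :=
            intervalIntegral.integral_nonneg hab.le fun x _ => abs_nonneg _
          gcongr
  have := abs_sub_le_intervalIntegral_abs_deriv hv' hs hξab
  have := abs_sub_abs_le_abs_sub (deriv v s) (deriv v ξ)
  linarith

lemma le_two_mul_rpow_mul_rpow_of_forall_le_of_pos {X a b p q L : ℝ} (ha : 0 < a) (hb : 0 < b)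
    (hp : 0 < p) (hq : 0 < q) (hL : 0 < L)
    (hX : ∀ h, 0 < h → h ≤ L → X ≤ a * h ^ (-p) + b * h ^ q) :
    X ≤ 2 * (a ^ (q / (p + q)) * b ^ (p / (p + q))) + 2 * (a * L ^ (-p)) := by
  have hpq : 0 < p + q := add_pos hp hq
  -- `h₀` balances the two terms: `a * h₀ ^ (-p) = b * h₀ ^ q`
  set h₀ := (a / b) ^ (1 / (p + q)) with hh₀
  have hh₀0 : 0 < h₀ := by positivity
  rcases le_total h₀ L with hle | hle
  · have h1 : a * h₀ ^ (-p) = a ^ (q / (p + q)) * b ^ (p / (p + q)) := by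
      refine Real.log_injOn_pos (mem_Ioi.2 (by positivity)) (mem_Ioi.2 (by positivity)) ?_
      simp (disch := positivity) only [hh₀, Real.log_mul, Real.log_rpow, Real.log_div]
      field_simp
      ring
    have h2 : b * h₀ ^ q = a ^ (q / (p + q)) * b ^ (p / (p + q)) := by
      refine Real.log_injOn_pos (mem_Ioi.2 (by positivity)) (mem_Ioi.2 (by positivity)) ?_
      simp (disch := positivity) only [hh₀, Real.log_mul, Real.log_rpow, Real.log_div]
      field_simp
      ring
    have := hX h₀ hh₀0 hle
    have : 0 ≤ a * L ^ (-p) := by positivity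
    linarith
  · have hLpq : b * L ^ (p + q) ≤ a := by
      have : L ^ (p + q) ≤ a / b := by
        calc L ^ (p + q) ≤ h₀ ^ (p + q) := Real.rpow_le_rpow hL.le hle hpq.le
          _ = a / b := by rw [hh₀, ← Real.rpow_mul (by positivity), one_div_mul_cancel hpq.ne',
              Real.rpow_one]
      rwa [le_div_iff₀ hb, mul_comm] at this
    have hbL : b * L ^ q ≤ a * L ^ (-p) := by
      calc b * L ^ q = b * L ^ (p + q) * L ^ (-p) := by
            rw [mul_assoc, ← Real.rpow_add hL]; ring_nf
        _ ≤ a * L ^ (-p) := by gcongr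
    have := hX L hL le_rfl
    have : 0 ≤ a ^ (q / (p + q)) * b ^ (p / (p + q)) := by positivity
    linarith

lemma le_two_mul_rpow_mul_rpow_of_forall_le {X a b p q L : ℝ} (ha : 0 ≤ a) (hb : 0 ≤ b)
    (hp : 0 < p) (hq : 0 < q) (hL : 0 < L)
    (hX : ∀ h, 0 < h → h ≤ L → X ≤ a * h ^ (-p) + b * h ^ q) :
    X ≤ 2 * (a ^ (q / (p + q)) * b ^ (p / (p + q))) + 2 * (a * L ^ (-p)) := by
  set φ : ℝ → ℝ := fun ε =>
    2 * ((a + ε) ^ (q / (p + q)) * (b + ε) ^ (p / (p + q))) + 2 * ((a + ε) * L ^ (-p))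
  have hφ : Continuous φ := by
    have hpq : 0 < p + q := add_pos hp hq
    have hθq : 0 ≤ q / (p + q) := by positivity
    have hθp : 0 ≤ p / (p + q) := by positivity
    fun_prop (disch := assumption)
  -- perturb `a` and `b` to positive values and let the perturbation tend to `0`
  have hle : ∀ ε > 0, X ≤ φ ε := fun ε hε =>
    le_two_mul_rpow_mul_rpow_of_forall_le_of_pos (by positivity) (by positivity) hp hq hL
      fun h hh hhL => (hX h hh hhL).trans (by gcongr <;> linarith)
  have hlim : Filter.Tendsto φ (nhdsWithin 0 (Ioi 0)) (nhds (φ 0)) :=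
    hφ.continuousAt.tendsto.mono_left nhdsWithin_le_nhds
  simpa [φ] using ge_of_tendsto hlim (eventually_nhdsWithin_of_forall hle)

lemma abs_le_intervalIntegral_abs_add {v : ℝ → ℝ} (hv : ContDiff ℝ 2 v) {a b x : ℝ} (hab : a < b)
    (hx : x ∈ Icc a b) :
    |v x| ≤ 19 / (b - a) * (∫ s in a..b, |v s|) + (b - a) * ∫ s in a..b, |deriv (deriv v) s| := by
  have hL : 0 < b - a := sub_pos.mpr hab
  obtain ⟨y, hy, hvy⟩ := exists_abs_mul_le_intervalIntegral_abs hv.continuous le_rfl hab.le le_rfl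
  have hvxy : |v x - v y| ≤ (18 / (b - a) ^ 2 * (∫ s in a..b, |v s|)
      + ∫ s in a..b, |deriv (deriv v) s|) * |x - y| :=
    (convex_Icc a b).norm_image_sub_le_of_norm_deriv_le
      (fun s _ => (hv.differentiable (by norm_num)).differentiableAt)
      (fun s hs => abs_deriv_le_intervalIntegral_abs hv hab hs) hy hx
  have hxy : |x - y| ≤ b - a :=
    abs_sub_le_iff.mpr ⟨by linarith [hx.2, hy.1], by linarith [hx.1, hy.2]⟩
  have hI₀ : 0 ≤ ∫ s in a..b, |v s| :=
    intervalIntegral.integral_nonneg hab.le fun s _ => abs_nonneg _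
  have hI₂ : 0 ≤ ∫ s in a..b, |deriv (deriv v) s| :=
    intervalIntegral.integral_nonneg hab.le fun s _ => abs_nonneg _
  have hvy' : |v y| ≤ 1 / (b - a) * ∫ s in a..b, |v s| := by
    rw [one_div, ← div_eq_inv_mul, le_div_iff₀ hL]; exact hvy
  calc |v x| ≤ |v y| + |v x - v y| := by linarith [abs_sub_abs_le_abs_sub (v x) (v y)]
    _ ≤ 1 / (b - a) * (∫ s in a..b, |v s|) + (18 / (b - a) ^ 2 * (∫ s in a..b, |v s|)
          + ∫ s in a..b, |deriv (deriv v) s|) * (b - a) := add_le_add hvy' (hvxy.trans (by gcongr))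
    _ = _ := by field_simp; ring

lemma abs_le_rpow_mul_add_rpow_mul {v : ℝ → ℝ} (hv : ContDiff ℝ 2 v) {a b x h : ℝ}
    (hh : 0 < h) (hhL : h ≤ b - a) (hx : x ∈ Icc a b) :
    |v x| ≤ 19 * (h ^ (-(1 / 2) : ℝ) * (∫ s in a..b, v s ^ 2) ^ (1 / 2 : ℝ)
      + h ^ (3 / 2 : ℝ) * (∫ s in a..b, deriv (deriv v) s ^ 2) ^ (1 / 2 : ℝ)) := by
  set α := min x (b - h)
  have hαa : a ≤ α := le_min hx.1 (by linarith)
  have hαb : α + h ≤ b := by linarith [min_le_right x (b - h)]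
  have hxα : x ∈ Icc α (α + h) := ⟨min_le_left _ _, by
    linarith [le_min (show x - h ≤ x by linarith) (show x - h ≤ b - h by linarith [hx.2])]⟩
  have hv'' : Continuous (deriv (deriv v)) := (hv.iterate_deriv' 1 1).continuous_deriv le_rfl
  have hpt := abs_le_intervalIntegral_abs_add hv (by linarith : α < α + h) hxα
  have h₀ := intervalIntegral_abs_le_rpow_mul_integral_sq hv.continuous hαa (by linarith)
    hαb
  have h₂ := intervalIntegral_abs_le_rpow_mul_integral_sq hv'' hαa (by linarith) hαb
  simp only [add_sub_cancel_left] at hpt h₀ h₂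
  have hneg : 19 / h * h ^ (1 / 2 : ℝ) = 19 * h ^ (-(1 / 2) : ℝ) := by
    rw [show -(1 / 2 : ℝ) = 1 / 2 - 1 by norm_num, Real.rpow_sub_one hh.ne']
    ring
  have hpos : h * h ^ (1 / 2 : ℝ) = h ^ (3 / 2 : ℝ) := by
    rw [show (3 / 2 : ℝ) = 1 / 2 + 1 by norm_num, Real.rpow_add_one hh.ne', mul_comm]
  have hD : 0 ≤ h ^ (3 / 2 : ℝ) * (∫ s in a..b, deriv (deriv v) s ^ 2) ^ (1 / 2 : ℝ) :=
    mul_nonneg (by positivity) (Real.rpow_nonneg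
      (intervalIntegral.integral_nonneg (by linarith) fun s _ => sq_nonneg _) _)
  calc |v x| ≤ 19 / h * (h ^ (1 / 2 : ℝ) * (∫ s in a..b, v s ^ 2) ^ (1 / 2 : ℝ))
        + h * (h ^ (1 / 2 : ℝ) * (∫ s in a..b, deriv (deriv v) s ^ 2) ^ (1 / 2 : ℝ)) := by
        refine hpt.trans (add_le_add ?_ ?_) <;> gcongr
    _ = 19 * h ^ (-(1 / 2) : ℝ) * (∫ s in a..b, v s ^ 2) ^ (1 / 2 : ℝ)
        + h ^ (3 / 2 : ℝ) * (∫ s in a..b, deriv (deriv v) s ^ 2) ^ (1 / 2 : ℝ) := by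
        rw [← mul_assoc, hneg, ← mul_assoc, hpos]
    _ ≤ _ := by linarith

lemma abs_le_rpow_mul_rpow_add {v : ℝ → ℝ} (hv : ContDiff ℝ 2 v) {a b x : ℝ} (hab : a < b)
    (hx : x ∈ Icc a b) :
    |v x| ≤ 38 * ((∫ s in a..b, v s ^ 2) ^ (3 / 8 : ℝ)
        * (∫ s in a..b, deriv (deriv v) s ^ 2) ^ (1 / 8 : ℝ)
      + (b - a) ^ (-(1 / 2) : ℝ) * (∫ s in a..b, v s ^ 2) ^ (1 / 2 : ℝ)) := by
  have hN : 0 ≤ ∫ s in a..b, v s ^ 2 :=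
    intervalIntegral.integral_nonneg hab.le fun s _ => sq_nonneg _
  have hD : 0 ≤ ∫ s in a..b, deriv (deriv v) s ^ 2 :=
    intervalIntegral.integral_nonneg hab.le fun s _ => sq_nonneg _
  have key := le_two_mul_rpow_mul_rpow_of_forall_le (X := |v x| / 19) (Real.rpow_nonneg hN _)
    (Real.rpow_nonneg hD _) (p := 1 / 2) (q := 3 / 2) (by norm_num) (by norm_num) (sub_pos.mpr hab)
    fun h hh hhL => by
      rw [div_le_iff₀ (by norm_num)]
      exact (abs_le_rpow_mul_add_rpow_mul hv hh hhL hx).trans_eq (by ring)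
  rw [← Real.rpow_mul hN, ← Real.rpow_mul hD] at key
  norm_num [div_le_iff₀] at key
  exact key.trans_eq (by ring)

lemma intervalIntegral_abs_pow_three_le {v : ℝ → ℝ} (hv : Continuous v) {a b M : ℝ} (hab : a ≤ b)
    (hM : ∀ x ∈ Icc a b, |v x| ≤ M) :
    ∫ x in a..b, |v x| ^ 3 ≤ M * ∫ x in a..b, v x ^ 2 := by
  rw [← intervalIntegral.integral_const_mul]
  refine intervalIntegral.integral_mono_on hab ((hv.abs.pow 3).intervalIntegrable a b)
    ((continuous_const.mul (hv.pow 2)).intervalIntegrable a b) fun x hx => ?_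
  calc |v x| ^ 3 = |v x| * v x ^ 2 := by rw [pow_succ', sq_abs]
    _ ≤ M * v x ^ 2 := mul_le_mul_of_nonneg_right (hM x hx) (sq_nonneg _)

lemma setIntegral_Ioo_abs_pow_three_le {v : ℝ → ℝ} (hv : ContDiff ℝ 2 v) {a b : ℝ} (hab : a < b) :
    ∫ x in Ioo a b, |v x| ^ 3
      ≤ 38 * (∫ x in Ioo a b, v x ^ 2) ^ (11 / 8 : ℝ)
          * (∫ x in Ioo a b, deriv (deriv v) x ^ 2) ^ (1 / 8 : ℝ)
        + 38 * (b - a) ^ (-(1 / 2) : ℝ) * (∫ x in Ioo a b, v x ^ 2) ^ (3 / 2 : ℝ) := by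
  simp only [← integral_Ioc_eq_integral_Ioo, ← intervalIntegral.integral_of_le hab.le]
  have hN : 0 ≤ ∫ s in a..b, v s ^ 2 :=
    intervalIntegral.integral_nonneg hab.le fun s _ => sq_nonneg _
  refine (intervalIntegral_abs_pow_three_le hv.continuous hab.le
    fun x hx => abs_le_rpow_mul_rpow_add hv hab hx).trans_eq ?_
  rw [show (11 / 8 : ℝ) = 3 / 8 + 1 by norm_num, show (3 / 2 : ℝ) = 1 / 2 + 1 by norm_num,
    Real.rpow_add_one' hN (by norm_num), Real.rpow_add_one' hN (by norm_num)]
  ring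

lemma integral_le_of_ae_le_mul_rpow_add {α : Type*} [MeasurableSpace α] {μ : Measure α}
    [IsFiniteMeasure μ] {F G : α → ℝ} {c d θ : ℝ} (hc : 0 ≤ c) (hθ0 : 0 ≤ θ) (hθ1 : θ ≤ 1)
    (hF0 : 0 ≤ᵐ[μ] F) (hG0 : 0 ≤ᵐ[μ] G) (hG : Integrable G μ)
    (hGθ : Integrable (fun x => G x ^ θ) μ) (hFG : ∀ᵐ x ∂μ, F x ≤ c * G x ^ θ + d) :
    ∫ x, F x ∂μ ≤ c * (μ.real univ ^ (1 - θ) * (∫ x, G x ∂μ) ^ θ) + d * μ.real univ := by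
  calc ∫ x, F x ∂μ ≤ ∫ x, (c * G x ^ θ + d) ∂μ :=
        integral_mono_of_nonneg hF0 ((hGθ.const_mul c).add (integrable_const d)) hFG
    _ = c * ∫ x, G x ^ θ ∂μ + d * μ.real univ := by
        rw [integral_add (hGθ.const_mul c) (integrable_const d), integral_const_mul,
          integral_const, smul_eq_mul, mul_comm d]
    _ ≤ _ := by gcongr; exact integral_rpow_le_of_le_one hG0 hG hθ0 hθ1 hGθ

lemma setIntegral_Ioo_setIntegral_Ioo_abs_pow_three_le {r x₀ t₀ A : ℝ} {u : ℝ → ℝ → ℝ}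
    (hr : 0 < r) (hA : 0 ≤ A) (hu : ∀ t, ContDiff ℝ 2 (u t))
    (hu'' : Continuous (fun p : ℝ × ℝ => deriv (deriv (u p.1)) p.2))
    (hS : ∀ᵐ t ∂(volume.restrict (Ioo (t₀ - r ^ 4) (t₀ + r ^ 4))),
      ∫ x in Ioo (x₀ - r) (x₀ + r), u t x ^ 2 ≤ r * A) :
    ∫ t in Ioo (t₀ - r ^ 4) (t₀ + r ^ 4), ∫ x in Ioo (x₀ - r) (x₀ + r), |u t x| ^ 3
      ≤ 38 * (r * A) ^ (11 / 8 : ℝ) * ((2 * r ^ 4) ^ (7 / 8 : ℝ)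
          * (∫ t in Ioo (t₀ - r ^ 4) (t₀ + r ^ 4), ∫ x in Ioo (x₀ - r) (x₀ + r),
              deriv (deriv (u t)) x ^ 2) ^ (1 / 8 : ℝ))
        + 38 * (2 * r) ^ (-(1 / 2) : ℝ) * (r * A) ^ (3 / 2 : ℝ) * (2 * r ^ 4) := by
  have hG : Continuous fun t => ∫ x in Ioo (x₀ - r) (x₀ + r), deriv (deriv (u t)) x ^ 2 := by
    simp only [← integral_Icc_eq_integral_Ioo]
    exact continuous_parametric_integral_of_continuous (hu''.pow 2) isCompact_Icc
  have hG0 : ∀ t, 0 ≤ ∫ x in Ioo (x₀ - r) (x₀ + r), deriv (deriv (u t)) x ^ 2 := fun t =>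
    setIntegral_nonneg measurableSet_Ioo fun _ _ => sq_nonneg _
  have hpt : ∀ᵐ t ∂(volume.restrict (Ioo (t₀ - r ^ 4) (t₀ + r ^ 4))),
      ∫ x in Ioo (x₀ - r) (x₀ + r), |u t x| ^ 3
        ≤ 38 * (r * A) ^ (11 / 8 : ℝ)
            * (∫ x in Ioo (x₀ - r) (x₀ + r), deriv (deriv (u t)) x ^ 2) ^ (1 / 8 : ℝ)
          + 38 * (2 * r) ^ (-(1 / 2) : ℝ) * (r * A) ^ (3 / 2 : ℝ) := by
    filter_upwards [hS] with t ht
    have hS0 : 0 ≤ ∫ x in Ioo (x₀ - r) (x₀ + r), u t x ^ 2 :=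
      setIntegral_nonneg measurableSet_Ioo fun _ _ => sq_nonneg _
    refine (setIntegral_Ioo_abs_pow_three_le (hu t) (by linarith)).trans ?_
    rw [show x₀ + r - (x₀ - r) = 2 * r by ring]
    have := hG0 t
    gcongr
  have hbound := integral_le_of_ae_le_mul_rpow_add
    (μ := volume.restrict (Ioo (t₀ - r ^ 4) (t₀ + r ^ 4))) (by positivity) (θ := 1 / 8)
    (by norm_num) (by norm_num)
    (Filter.Eventually.of_forall fun t => setIntegral_nonneg measurableSet_Ioo fun _ _ => by
      positivity)
    (Filter.Eventually.of_forall hG0) (hG.integrableOn_Icc.mono_set Ioo_subset_Icc_self)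
    ((hG.rpow_const fun _ => Or.inr (by norm_num)).integrableOn_Icc.mono_set Ioo_subset_Icc_self)
    hpt
  rwa [measureReal_restrict_apply_univ, Real.volume_real_Ioo_of_le (by linarith [pow_pos hr 4]),
    show t₀ + r ^ 4 - (t₀ - r ^ 4) = 2 * r ^ 4 by ring, show (1 - 1 / 8 : ℝ) = 7 / 8 by norm_num]
    at hbound

lemma cylinder_scaling_le {r A I : ℝ} (hr : 0 < r) (hA : 0 ≤ A) (hI : 0 ≤ I) :
    38 * (r * A) ^ (11 / 8 : ℝ) * ((2 * r ^ 4) ^ (7 / 8 : ℝ) * I ^ (1 / 8 : ℝ))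
        + 38 * (2 * r) ^ (-(1 / 2) : ℝ) * (r * A) ^ (3 / 2 : ℝ) * (2 * r ^ 4)
      ≤ r ^ 5 * (76 * A ^ (11 / 8 : ℝ) * ((1 / r) * I) ^ (1 / 8 : ℝ) + 76 * A ^ (3 / 2 : ℝ)) := by
  have k₁ : r ^ (11 / 8 : ℝ) * (2 * r ^ 4) ^ (7 / 8 : ℝ)
      = 2 ^ (7 / 8 : ℝ) * r ^ 5 * (1 / r) ^ (1 / 8 : ℝ) := by
    refine Real.log_injOn_pos (mem_Ioi.2 (by positivity)) (mem_Ioi.2 (by positivity)) ?_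
    simp (disch := positivity) only [Real.log_mul, Real.log_rpow, Real.log_pow, one_div,
      Real.log_inv]
    push_cast
    ring
  have k₂ : (2 * r) ^ (-(1 / 2) : ℝ) * r ^ (3 / 2 : ℝ) * (2 * r ^ 4) = 2 ^ (1 / 2 : ℝ) * r ^ 5 := by
    refine Real.log_injOn_pos (mem_Ioi.2 (by positivity)) (mem_Ioi.2 (by positivity)) ?_
    simp (disch := positivity) only [Real.log_mul, Real.log_rpow, Real.log_pow]
    push_cast
    ring
  have h₁ : (2 : ℝ) ^ (7 / 8 : ℝ) ≤ 2 := Real.rpow_le_self_of_one_le (by norm_num) (by norm_num)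
  have h₂ : (2 : ℝ) ^ (1 / 2 : ℝ) ≤ 2 := Real.rpow_le_self_of_one_le (by norm_num) (by norm_num)
  rw [Real.mul_rpow hr.le hA, Real.mul_rpow hr.le hA, Real.mul_rpow (by positivity) hI]
  calc _ = 38 * 2 ^ (7 / 8 : ℝ)
            * (r ^ 5 * A ^ (11 / 8 : ℝ) * ((1 / r) ^ (1 / 8 : ℝ) * I ^ (1 / 8 : ℝ)))
          + 38 * 2 ^ (1 / 2 : ℝ) * (r ^ 5 * A ^ (3 / 2 : ℝ)) := by
        linear_combination (38 * A ^ (11 / 8 : ℝ) * I ^ (1 / 8 : ℝ)) * k₁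
          + (38 * A ^ (3 / 2 : ℝ)) * k₂
    _ ≤ 38 * 2 * (r ^ 5 * A ^ (11 / 8 : ℝ) * ((1 / r) ^ (1 / 8 : ℝ) * I ^ (1 / 8 : ℝ)))
          + 38 * 2 * (r ^ 5 * A ^ (3 / 2 : ℝ)) := by gcongr
    _ = _ := by ring

/-- Interpolation inequality `W ≤ c A^{11/8} E^{1/8} + c A^{3/2}`, where
`A = ess sup_s r^{-1} ∫_{B_r} u(s)²`, `E = r^{-1} ∫_{Q_r} uₓₓ²`,
`W = r^{-5} ∫_{Q_r} |u|³`, on the cylinder `Q_r = B_r(x₀) × (t₀-r⁴, t₀+r⁴)`. -/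
theorem stmt12 :
    ∃ c : ℝ, 0 < c ∧ ∀ (r x₀ t₀ A : ℝ) (u : ℝ → ℝ → ℝ),
      0 < r →
      (∀ t, ContDiff ℝ 2 (u t)) →
      Continuous (fun p : ℝ × ℝ => u p.1 p.2) →
      Continuous (fun p : ℝ × ℝ => deriv (deriv (u p.1)) p.2) →
      0 ≤ A →
      (∀ᵐ s ∂(volume.restrict (Set.Ioo (t₀ - r ^ 4) (t₀ + r ^ 4))),
        (1 / r) * (∫ x in Set.Ioo (x₀ - r) (x₀ + r), (u s x) ^ 2) ≤ A) →
      (1 / r ^ 5) * (∫ t in Set.Ioo (t₀ - r ^ 4) (t₀ + r ^ 4),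
          ∫ x in Set.Ioo (x₀ - r) (x₀ + r), |u t x| ^ 3)
        ≤ c * A ^ ((11:ℝ)/8) *
            ((1 / r) * ∫ t in Set.Ioo (t₀ - r ^ 4) (t₀ + r ^ 4),
              ∫ x in Set.Ioo (x₀ - r) (x₀ + r), (deriv (deriv (u t)) x) ^ 2) ^ ((1:ℝ)/8)
          + c * A ^ ((3:ℝ)/2) := by
  refine ⟨76, by norm_num, fun r x₀ t₀ A u hr hu _ hu'' hA hae => ?_⟩
  have hI : 0 ≤ ∫ t in Ioo (t₀ - r ^ 4) (t₀ + r ^ 4), ∫ x in Ioo (x₀ - r) (x₀ + r),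
      deriv (deriv (u t)) x ^ 2 :=
    setIntegral_nonneg measurableSet_Ioo fun t _ =>
      setIntegral_nonneg measurableSet_Ioo fun _ _ => sq_nonneg _
  rw [one_div, inv_mul_le_iff₀ (by positivity)]
  refine (setIntegral_Ioo_setIntegral_Ioo_abs_pow_three_le hr hA hu hu'' ?_).trans
    (cylinder_scaling_le hr hA hI)
  filter_upwards [hae] with t ht
  rwa [one_div, inv_mul_le_iff₀ hr] at ht
end

section
/- Vitali-type absolute continuity implies vanishing parabolic Hausdorff measure: let S ⊂ ℝ² and g ∈ L¹(ℝ²), g ≥ 0, ε > 0, and suppose that for every open set V ⊇ S and every z ∈ S there exist arbitrarily small r > 0 with Q_{r/5}(z) ⊂ V and (5/r) ∫_{Q_{r/5}(z)} g > ε. If moreover S has Lebesgue measure zero, then P¹(S) = 0, where P¹ is the one-dimensional parabolic Hausdorff measure. -/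
/-!
With `μ = g dx`, the hypothesis `|S| = 0` gives `μ S = 0`, so `S` has open neighbourhoods `V` of
arbitrarily small `μ`-measure. At every `z ∈ S` the hypothesis provides a cylinder
`Q_{r/5}(z) ⊆ V` with `r < (5/ε) μ(Q_{r/5}(z))`. A Vitali subfamily of these cylinders is
disjoint, while the enlarged cylinders `Q_r` still cover `S`; hence
`P¹_δ(S) ≤ (5/ε) μ(V) + η` for every `η > 0`, which is as small as we like.
-/

open MeasureTheory

/-- The parabolic cylinder `Q(z,r) = (x-r,x+r) × (t-r⁴,t+r⁴)`. -/
def pQ (z : ℝ × ℝ) (r : ℝ) : Set (ℝ × ℝ) :=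
  Set.Ioo (z.1 - r) (z.1 + r) ×ˢ Set.Ioo (z.2 - r ^ 4) (z.2 + r ^ 4)

/-- Pre-measure `P¹_δ` from covers by parabolic cylinders of radii `< δ`. -/
noncomputable def parabolicHausdorffPre (δ : ℝ) (X : Set (ℝ × ℝ)) : ENNReal :=
  ⨅ (z : ℕ → ℝ × ℝ) (ρ : ℕ → ℝ) (_ : ∀ n, ρ n ∈ Set.Ioo (0:ℝ) δ)
    (_ : X ⊆ ⋃ n, pQ (z n) (ρ n)), ∑' n, ENNReal.ofReal (ρ n)

/-- The one-dimensional parabolic Hausdorff measure `P¹`. -/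
noncomputable def parabolicHausdorff1 (X : Set (ℝ × ℝ)) : ENNReal :=
  ⨆ δ ∈ Set.Ioi (0:ℝ), parabolicHausdorffPre δ X

lemma isOpen_pQ (z : ℝ × ℝ) (r : ℝ) : IsOpen (pQ z r) :=
  isOpen_Ioo.prod isOpen_Ioo

lemma mem_pQ_self {z : ℝ × ℝ} {r : ℝ} (hr : 0 < r) : z ∈ pQ z r := by
  constructor <;> constructor <;> simp <;> positivity

lemma pQ_subset_pQ_five_mul_of_inter_nonempty {z b : ℝ × ℝ} {ρ σ : ℝ} (hle : ρ ≤ 2 * σ)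
    (hne : (pQ z ρ ∩ pQ b σ).Nonempty) : pQ z ρ ⊆ pQ b (5 * σ) := by
  obtain ⟨w, ⟨⟨w11, w12⟩, ⟨w21, w22⟩⟩, ⟨⟨w31, w32⟩, ⟨w41, w42⟩⟩⟩ := hne
  rintro p ⟨⟨p11, p12⟩, ⟨p21, p22⟩⟩
  have hρ : 0 < ρ := by linarith
  have hσ : 0 < σ := by linarith
  have hρ4 : ρ ^ 4 ≤ 16 * σ ^ 4 := by nlinarith [pow_le_pow_left₀ hρ.le hle 4]
  refine ⟨⟨?_, ?_⟩, ⟨?_, ?_⟩⟩ <;> nlinarith [pow_pos hσ 4]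

lemma exists_disjoint_pQ_subfamily_covering {S : Set (ℝ × ℝ)} {R : ℝ} (r : ℝ × ℝ → ℝ)
    (hr0 : ∀ z ∈ S, 0 < r z) (hrR : ∀ z ∈ S, r z ≤ R) :
    ∃ u ⊆ S, u.Countable ∧ u.PairwiseDisjoint (fun b => pQ b (r b / 5)) ∧
      S ⊆ ⋃ b ∈ u, pQ b (r b) := by
  have hne : ∀ z ∈ S, (pQ z (r z / 5)).Nonempty := fun z hz =>
    ⟨z, mem_pQ_self (by linarith [hr0 z hz])⟩
  obtain ⟨u, huS, hdisj, hcov⟩ := Vitali.exists_disjoint_subfamily_covering_enlargement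
    (fun z => pQ z (r z / 5)) S (fun z => r z / 5) 2 one_lt_two
    (fun z hz => by linarith [hr0 z hz]) (R / 5) (fun z hz => by linarith [hrR z hz]) hne
  refine ⟨u, huS, hdisj.countable_of_isOpen (fun _ _ => isOpen_pQ _ _)
    (fun b hb => hne b (huS hb)), hdisj, fun z hz => ?_⟩
  obtain ⟨b, hbu, hzb, hle⟩ := hcov z hz
  have hsub := pQ_subset_pQ_five_mul_of_inter_nonempty hle hzb
  rw [mul_div_cancel₀ _ (by norm_num : (5 : ℝ) ≠ 0)] at hsub
  exact Set.mem_biUnion hbu (hsub (mem_pQ_self (by linarith [hr0 z hz])))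

lemma parabolicHausdorffPre_le_of_cover {δ : ℝ} {X : Set (ℝ × ℝ)} (z : ℕ → ℝ × ℝ)
    (ρ : ℕ → ℝ) (hρ : ∀ n, ρ n ∈ Set.Ioo 0 δ) (hX : X ⊆ ⋃ n, pQ (z n) (ρ n)) :
    parabolicHausdorffPre δ X ≤ ∑' n, ENNReal.ofReal (ρ n) :=
  iInf_le_of_le z <| iInf_le_of_le ρ <| iInf_le_of_le hρ <| iInf_le _ hX

lemma parabolicHausdorffPre_le_tsum_add {ι : Type*} [Countable ι] {δ η : ℝ} (hδ : 0 < δ)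
    (hη : 0 < η) {X : Set (ℝ × ℝ)} (z : ι → ℝ × ℝ) (ρ : ι → ℝ)
    (hρ : ∀ i, ρ i ∈ Set.Ioo 0 δ) (hX : X ⊆ ⋃ i, pQ (z i) (ρ i)) :
    parabolicHausdorffPre δ X ≤ ∑' i, ENNReal.ofReal (ρ i) + ENNReal.ofReal η := by
  obtain ⟨e, he⟩ := exists_injective_nat ι
  set c := min δ η
  have hc : 0 < c := lt_min hδ hη
  -- indices outside the range of `e` get radii `c / 2 / 2 ^ n`, of total length `c ≤ η`
  set pad : ℕ → ℝ := fun n => c / 2 / 2 ^ n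
  have hpad : ∀ n, pad n ∈ Set.Ioo 0 δ := fun n =>
    ⟨by positivity, by
      have : pad n ≤ c / 2 := div_le_self (by positivity) (one_le_pow₀ one_le_two)
      linarith [min_le_left δ η]⟩
  have hρ' : ∀ n, Function.extend e ρ pad n ∈ Set.Ioo 0 δ := by
    intro n
    by_cases hn : ∃ i, e i = n
    · obtain ⟨i, rfl⟩ := hn
      rw [he.extend_apply]
      exact hρ i
    · rw [Function.extend_apply' _ _ _ hn]
      exact hpad n
  have hcover : X ⊆ ⋃ n, pQ (Function.extend e z 0 n) (Function.extend e ρ pad n) := by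
    refine hX.trans (Set.iUnion_subset fun i => Set.subset_iUnion_of_subset (e i) ?_)
    rw [he.extend_apply, he.extend_apply]
  have hsplit : ∀ n, ENNReal.ofReal (Function.extend e ρ pad n) ≤
      Function.extend e (fun i => ENNReal.ofReal (ρ i)) 0 n + ENNReal.ofReal (pad n) := by
    intro n
    by_cases hn : ∃ i, e i = n
    · obtain ⟨i, rfl⟩ := hn
      rw [he.extend_apply, he.extend_apply]
      exact le_self_add
    · rw [Function.extend_apply' _ _ _ hn, Function.extend_apply' _ _ _ hn, Pi.zero_apply,
        zero_add]
  have hpad_sum : ∑' n, ENNReal.ofReal (pad n) = ENNReal.ofReal c := by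
    rw [← ENNReal.ofReal_tsum_of_nonneg (fun n => (hpad n).1.le) (summable_geometric_two' c),
      tsum_geometric_two']
  calc parabolicHausdorffPre δ X ≤ ∑' n, ENNReal.ofReal (Function.extend e ρ pad n) :=
        parabolicHausdorffPre_le_of_cover _ _ hρ' hcover
    _ ≤ ∑' n, Function.extend e (fun i => ENNReal.ofReal (ρ i)) 0 n +
          ∑' n, ENNReal.ofReal (pad n) := by
        rw [← ENNReal.tsum_add]
        exact ENNReal.tsum_le_tsum hsplit
    _ = ∑' i, ENNReal.ofReal (ρ i) + ENNReal.ofReal c := by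
        rw [tsum_extend_zero he, hpad_sum]
    _ ≤ ∑' i, ENNReal.ofReal (ρ i) + ENNReal.ofReal η := by
        gcongr
        exact min_le_right δ η
lemma parabolicHausdorffPre_le_mul_measure_add {S V : Set (ℝ × ℝ)} (μ : Measure (ℝ × ℝ))
    {δ η : ℝ} {C : ENNReal} (hδ : 0 < δ) (hη : 0 < η) (r : ℝ × ℝ → ℝ)
    (hr : ∀ z ∈ S, r z ∈ Set.Ioo 0 δ) (hrV : ∀ z ∈ S, pQ z (r z / 5) ⊆ V)
    (hrμ : ∀ z ∈ S, ENNReal.ofReal (r z) ≤ C * μ (pQ z (r z / 5))) :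
    parabolicHausdorffPre δ S ≤ C * μ V + ENNReal.ofReal η := by
  obtain ⟨u, huS, hu, hdisj, hcov⟩ := exists_disjoint_pQ_subfamily_covering r
    (fun z hz => (hr z hz).1) (fun z hz => (hr z hz).2.le)
  have := hu.to_subtype
  calc parabolicHausdorffPre δ S ≤ ∑' b : u, ENNReal.ofReal (r b) + ENNReal.ofReal η :=
        parabolicHausdorffPre_le_tsum_add hδ hη (fun b : u => (b : ℝ × ℝ)) (fun b => r b)
          (fun b => hr b (huS b.2)) (by rwa [Set.biUnion_eq_iUnion] at hcov)
    _ ≤ ∑' b : u, C * μ (pQ b (r b / 5)) + ENNReal.ofReal η := by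
        gcongr with b
        exact hrμ b (huS b.2)
    _ = C * μ (⋃ b : u, pQ b (r b / 5)) + ENNReal.ofReal η := by
        rw [ENNReal.tsum_mul_left,
          measure_iUnion hdisj.subtype fun b => (isOpen_pQ _ _).measurableSet]
    _ ≤ C * μ V + ENNReal.ofReal η := by
        gcongr
        exact Set.iUnion_subset fun b => hrV b (huS b.2)

lemma ofReal_le_mul_withDensity_of_lt_div_mul_setIntegral {α : Type*} [MeasurableSpace α]
    {μ : Measure α} {g : α → ℝ} {A : Set α} (hA : MeasurableSet A) (hg : IntegrableOn g A μ)
    (hg0 : 0 ≤ᵐ[μ.restrict A] g) {c r ε : ℝ} (hr : 0 < r) (hε : 0 < ε)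
    (h : ε < c / r * ∫ w in A, g w ∂μ) :
    ENNReal.ofReal r ≤
      ENNReal.ofReal (c / ε) * μ.withDensity (fun w => ENNReal.ofReal (g w)) A := by
  have hr_le : r ≤ c / ε * ∫ w in A, g w ∂μ := by
    rw [div_mul_eq_mul_div, lt_div_iff₀ hr] at h
    rw [div_mul_eq_mul_div, le_div_iff₀ hε]
    linarith
  rw [withDensity_apply _ hA, ← ofReal_integral_eq_lintegral_ofReal hg hg0,
    ← ENNReal.ofReal_mul' (integral_nonneg_of_ae hg0)]
  exact ENNReal.ofReal_le_ofReal hr_le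

lemma parabolicHausdorff1_eq_zero_of_forall_le {X : Set (ℝ × ℝ)}
    (h : ∀ δ > 0, ∀ η > 0, parabolicHausdorffPre δ X ≤ ENNReal.ofReal η) :
    parabolicHausdorff1 X = 0 := by
  refine le_antisymm (iSup₂_le fun δ hδ => ?_) bot_le
  refine ENNReal.le_of_forall_pos_le_add fun η hη _ => ?_
  simpa using h δ hδ η hη

/-- Vitali-type absolute continuity implies vanishing parabolic Hausdorff measure:
if `S` is Lebesgue-null, `g ∈ L¹` is nonnegative, and for every open `V ⊇ S` and every
`z ∈ S` there are arbitrarily small `r > 0` with `Q_{r/5}(z) ⊂ V` and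
`(5/r) ∫_{Q_{r/5}(z)} g > ε`, then `P¹(S) = 0`. -/
theorem stmt18 (S : Set (ℝ × ℝ)) (g : ℝ × ℝ → ℝ) (ε : ℝ)
    (hg : Integrable g) (hg0 : ∀ w, 0 ≤ g w) (hε : 0 < ε)
    (hSnull : volume S = 0)
    (h : ∀ V : Set (ℝ × ℝ), IsOpen V → S ⊆ V → ∀ z ∈ S, ∀ δ > 0,
      ∃ r ∈ Set.Ioo (0:ℝ) δ, pQ z (r/5) ⊆ V ∧ ε < (5 / r) * ∫ w in pQ z (r/5), g w) :
    parabolicHausdorff1 S = 0 := by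
  set μ := volume.withDensity fun w => ENNReal.ofReal (g w)
  have := isFiniteMeasure_withDensity_ofReal hg.2
  have hμS : μ S = 0 := withDensity_absolutelyContinuous _ _ hSnull
  refine parabolicHausdorff1_eq_zero_of_forall_le fun δ hδ η hη => ?_
  obtain ⟨V, hSV, hVo, hμV⟩ := Set.exists_isOpen_lt_of_lt S (ENNReal.ofReal (ε * η / 10))
    (by rw [hμS]; exact ENNReal.ofReal_pos.2 (by positivity))
  choose! r hr hrV hrg using fun z hz => h V hVo hSV z hz δ hδ
  calc parabolicHausdorffPre δ S ≤ ENNReal.ofReal (5 / ε) * μ V + ENNReal.ofReal (η / 2) :=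
        parabolicHausdorffPre_le_mul_measure_add μ hδ (by positivity) r hr hrV fun z hz =>
          ofReal_le_mul_withDensity_of_lt_div_mul_setIntegral (isOpen_pQ _ _).measurableSet
            hg.integrableOn (ae_of_all _ hg0) (hr z hz).1 hε (hrg z hz)
    _ ≤ ENNReal.ofReal (5 / ε) * ENNReal.ofReal (ε * η / 10) + ENNReal.ofReal (η / 2) := by
        gcongr
    _ = ENNReal.ofReal η := by
        rw [← ENNReal.ofReal_mul (by positivity), ← ENNReal.ofReal_add (by positivity)
          (by positivity)]
        congr 1
        field_simp
        ring
end
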